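/- The minimal face of x in a convex set C equals the union of {x} with all open segments contained in C that contain x. -/

import Mathlib

open Set

def IsFaceOf {W : Type*} [AddCommGroup W] [Module ℝ W] (C F : Set W) : Prop :=
  F ⊆ C ∧ Convex ℝ F ∧ ∀ y z : W, y ≠ z → openSegment ℝ y z ⊆ C →
    (openSegment ℝ y z ∩ F).Nonempty → openSegment ℝ y z ⊆ F

def minimalFace {W : Type*} [AddCommGroup W] [Module ℝ W] (C : Set W) (x : W) : Set W :=
  ⋂₀ {F | IsFaceOf C F ∧ x ∈ F}

/-!
A point `w ≠ x` shares an open segment of `C` with `x` exactly when, for some `ε > 0`, the segment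
`[x, w]` prolonged beyond both ends by `ε` times itself stays in `C`. In this form the set on the
right is visibly convex (the two prolonged endpoints are affine in `w`), and it is a face because
the relation is transitive. Conversely a face through `x` contains every open segment of `C`
through `x`.
-/

open Filter Topology

section

variable {V : Type*} [AddCommGroup V] [Module ℝ V] {C : Set V}

def SharesOpenSegment (C : Set V) (a b : V) : Prop :=
  ∃ y z : V, y ≠ z ∧ openSegment ℝ y z ⊆ C ∧ a ∈ openSegment ℝ y z ∧ b ∈ openSegment ℝ y z

def ExtendsBothWays (C : Set V) (ε : ℝ) (a b : V) : Prop :=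
  a + ε • (a - b) ∈ C ∧ b + ε • (b - a) ∈ C

theorem ExtendsBothWays.symm {ε : ℝ} {a b : V} (h : ExtendsBothWays C ε a b) :
    ExtendsBothWays C ε b a :=
  ⟨h.2, h.1⟩

theorem extendsBothWays_self {a : V} (ha : a ∈ C) (ε : ℝ) : ExtendsBothWays C ε a a := by
  simp [ExtendsBothWays, ha]

theorem left_mem_openSegment_extend {ε : ℝ} (hε : 0 < ε) (a b : V) :
    a ∈ openSegment ℝ (a + ε • (a - b)) (b + ε • (b - a)) := by
  refine ⟨(1 + ε) / (1 + 2 * ε), ε / (1 + 2 * ε), by positivity, by positivity, ?_, ?_⟩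
  · field_simp; ring
  · match_scalars <;> field_simp <;> ring

theorem ExtendsBothWays.left_mem (hC : Convex ℝ C) {ε : ℝ} (hε : 0 < ε) {a b : V}
    (h : ExtendsBothWays C ε a b) : a ∈ C :=
  hC.openSegment_subset h.1 h.2 (left_mem_openSegment_extend hε a b)

theorem ExtendsBothWays.sharesOpenSegment (hC : Convex ℝ C) {ε : ℝ} (hε : 0 < ε) {a b : V}
    (hab : a ≠ b) (h : ExtendsBothWays C ε a b) : SharesOpenSegment C a b := by
  refine ⟨_, _, ?_, hC.openSegment_subset h.1 h.2, left_mem_openSegment_extend hε a b, ?_⟩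
  · intro heq
    have : (1 + 2 * ε) • (b - a) = 0 := by
      rw [← sub_eq_zero.mpr heq.symm]; module
    exact hab (sub_eq_zero.mp (((smul_eq_zero.mp this).resolve_left (by positivity)))).symm
  · rw [openSegment_symm]
    exact left_mem_openSegment_extend hε b a

theorem SharesOpenSegment.exists_extendsBothWays {a b : V} (h : SharesOpenSegment C a b) :
    ∃ ε > 0, ExtendsBothWays C ε a b := by
  obtain ⟨y, z, -, hsub, ha, hb⟩ := h
  rw [openSegment_eq_image'] at hsub ha hb
  obtain ⟨s, hs, rfl⟩ := ha
  obtain ⟨t, ht, rfl⟩ := hb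
  have hnear : ∀ u v : ℝ, u ∈ Ioo (0 : ℝ) 1 →
      ∀ᶠ ε in 𝓝[>] (0 : ℝ), u + ε * (u - v) ∈ Ioo (0 : ℝ) 1 := fun u v hu =>
    nhdsWithin_le_nhds <|
      ((continuous_const.add (continuous_id.mul continuous_const)).tendsto' 0 u (by simp)).eventually
        (Ioo_mem_nhds hu.1 hu.2)
  obtain ⟨ε, ⟨hεs, hεt⟩, hε⟩ :=
    ((hnear s t hs).and (hnear t s ht)).and self_mem_nhdsWithin |>.exists
  refine ⟨ε, hε, hsub ⟨_, hεs, ?_⟩, hsub ⟨_, hεt, ?_⟩⟩ <;> simp only <;> module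

theorem ExtendsBothWays.mono (hC : Convex ℝ C) {ε ε' : ℝ} {a b : V}
    (h : ExtendsBothWays C ε a b) (hε' : 0 < ε') (hle : ε' ≤ ε) :
    ExtendsBothWays C ε' a b := by
  have hε : 0 < ε := hε'.trans_le hle
  have ht : ε' / ε ∈ Icc (0 : ℝ) 1 := ⟨by positivity, div_le_one_of_le₀ hle hε.le⟩
  have key : ∀ {p q : V}, p ∈ C → p + ε • (p - q) ∈ C → p + ε' • (p - q) ∈ C := fun hp hpq => by
    simpa [smul_smul, div_mul_cancel₀ _ hε.ne'] using hC.add_smul_mem hp hpq ht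
  exact ⟨key (h.left_mem hC hε) h.1, key (h.symm.left_mem hC hε) h.2⟩

theorem ExtendsBothWays.convexCombination (hC : Convex ℝ C) {ε : ℝ} {x w₁ w₂ : V}
    (h₁ : ExtendsBothWays C ε x w₁) (h₂ : ExtendsBothWays C ε x w₂) {l m : ℝ} (hl : 0 ≤ l)
    (hm : 0 ≤ m) (hlm : l + m = 1) : ExtendsBothWays C ε x (l • w₁ + m • w₂) := by
  obtain rfl : m = 1 - l := by linarith
  constructor
  · convert hC h₁.1 h₂.1 hl hm hlm using 1; module
  · convert hC h₁.2 h₂.2 hl hm hlm using 1; module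

theorem ExtendsBothWays.trans (hC : Convex ℝ C) {ε : ℝ} (hε : 0 ≤ ε) {a b c : V}
    (hab : ExtendsBothWays C ε a b) (hbc : ExtendsBothWays C ε b c) :
    ExtendsBothWays C (ε ^ 2 / (1 + 2 * ε)) a c := by
  -- weights `ε : 1 + ε` on `q + ε (q - p)` and `r + ε (r - q)` make `q` cancel
  have key : ∀ {p q r : V}, q + ε • (q - p) ∈ C → r + ε • (r - q) ∈ C →
      r + (ε ^ 2 / (1 + 2 * ε)) • (r - p) ∈ C := fun hq hr => by
    convert hC hq hr (by positivity : 0 ≤ ε / (1 + 2 * ε))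
      (by positivity : 0 ≤ (1 + ε) / (1 + 2 * ε)) (by field_simp; ring) using 1
    match_scalars <;> field_simp <;> ring
  exact ⟨key hbc.1 hab.1, key hab.2 hbc.2⟩

theorem IsFaceOf.mem_of_sharesOpenSegment {F : Set V} {x w : V} (hF : IsFaceOf C F) (hx : x ∈ F)
    (h : SharesOpenSegment C x w) : w ∈ F := by
  obtain ⟨y, z, hyz, hsub, hxyz, hwyz⟩ := h
  exact hF.2.2 y z hyz hsub ⟨x, hxyz, hx⟩ hwyz

theorem union_setOf_sharesOpenSegment (hC : Convex ℝ C) {x : V} (hx : x ∈ C) :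
    {x} ∪ {w | SharesOpenSegment C x w} = {w | ∃ ε > 0, ExtendsBothWays C ε x w} := by
  ext w
  constructor
  · rintro (rfl | hw)
    exacts [⟨1, one_pos, extendsBothWays_self hx 1⟩, hw.exists_extendsBothWays]
  · rintro ⟨ε, hε, hw⟩
    rcases eq_or_ne x w with rfl | hxw
    exacts [Or.inl rfl, Or.inr (hw.sharesOpenSegment hC hε hxw)]

theorem isFaceOf_setOf_extendsBothWays (hC : Convex ℝ C) (x : V) :
    IsFaceOf C {w | ∃ ε > 0, ExtendsBothWays C ε x w} := by
  refine ⟨fun w ⟨ε, hε, hw⟩ => hw.symm.left_mem hC hε, ?_, ?_⟩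
  · rintro w₁ ⟨ε₁, hε₁, h₁⟩ w₂ ⟨ε₂, hε₂, h₂⟩ l m hl hm hlm
    have hε : 0 < min ε₁ ε₂ := lt_min hε₁ hε₂
    refine ⟨_, hε, ExtendsBothWays.convexCombination hC ?_ ?_ hl hm hlm⟩
    exacts [h₁.mono hC hε (min_le_left _ _), h₂.mono hC hε (min_le_right _ _)]
  · rintro y z hyz hsub ⟨w₀, hw₀, ε, hε, hxw₀⟩ w hw
    obtain ⟨δ, hδ, hw₀w⟩ := SharesOpenSegment.exists_extendsBothWays ⟨y, z, hyz, hsub, hw₀, hw⟩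
    have hη : 0 < min ε δ := lt_min hε hδ
    exact ⟨_, by positivity, (hxw₀.mono hC hη (min_le_left _ _)).trans hC hη.le
      (hw₀w.mono hC hη (min_le_right _ _))⟩

end

theorem minimalFace_eq_union_openSegments
    {V : Type*} [AddCommGroup V] [Module ℝ V]
    {C : Set V} (hC : Convex ℝ C) {x : V} (hx : x ∈ C) :
    minimalFace C x = {x} ∪
      {w | ∃ y z : V, y ≠ z ∧ openSegment ℝ y z ⊆ C ∧ x ∈ openSegment ℝ y z ∧
        w ∈ openSegment ℝ y z} := by
  change minimalFace C x = {x} ∪ {w | SharesOpenSegment C x w}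
  apply Subset.antisymm
  · rw [union_setOf_sharesOpenSegment hC hx]
    exact sInter_subset_of_mem
      ⟨isFaceOf_setOf_extendsBothWays hC x, 1, one_pos, extendsBothWays_self hx 1⟩
  · rintro w (rfl | hw) F ⟨hF, hxF⟩
    exacts [hxF, hF.mem_of_sharesOpenSegment hxF hw]
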